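/- Let D ⊂ ℝ^d be a compact set and let 𝒴 be a family of nonempty subsets Y of the affine hull of D such that the sets conv(Y ∪ D) \ D, for Y ∈ 𝒴, are pairwise disjoint and nonempty (distinct members Y, Y' of 𝒴 give disjoint sets conv(Y ∪ D) \ D and conv(Y' ∪ D) \ D, and each such set is nonempty). Then 𝒴 is at most countable. -/

import Mathlib

/-! Every `conv(Y ∪ D)` spans the same affine subspace `A = aff(D)`, so it has nonempty interior
relative to `A`, and this interior is dense in it. Since `D` is closed and `conv(Y ∪ D) ⊈ D`, the
set `conv(Y ∪ D) \ D` therefore has nonempty interior relative to `A`. A separable space contains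
only countably many pairwise disjoint sets with nonempty interior. -/

open Set

noncomputable section

/-- Euclidean space `ℝ^n`. -/
abbrev E (n : ℕ) := EuclideanSpace ℝ (Fin n)

/-- A convex body of `ℝ^n`: a compact convex subset (possibly empty). -/
def IsBody {n : ℕ} (C : Set (E n)) : Prop := Convex ℝ C ∧ IsCompact C

/-- `Φ` represents a lattice homomorphism from `𝒞(ℝ^c)` to `𝒞(ℝ^d)`: it maps convex bodies
to convex bodies, and on convex bodies it preserves intersections (the lattice meet) and
convex hulls of unions (the lattice join). -/
def IsLatHom {c d : ℕ} (Φ : Set (E c) → Set (E d)) : Prop :=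
  (∀ C, IsBody C → IsBody (Φ C)) ∧
  ∀ C D : Set (E c), IsBody C → IsBody D →
    Φ (C ∩ D) = Φ C ∩ Φ D ∧ Φ (convexHull ℝ (C ∪ D)) = convexHull ℝ (Φ C ∪ Φ D)

/-- `Φ` is non-trivial: it is not constant on convex bodies. -/
def NonTrivial {c d : ℕ} (Φ : Set (E c) → Set (E d)) : Prop :=
  ∃ C D : Set (E c), IsBody C ∧ IsBody D ∧ Φ C ≠ Φ D

/-- The closed ray emanating from `o` in direction `u`. -/
def Ray {n : ℕ} (o u : E n) : Set (E n) := {p | ∃ t : ℝ, 0 ≤ t ∧ p = o + t • u}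

/-- An affine hyperplane of `ℝ^n`: a nonempty affine subspace of dimension `n - 1`. -/
def IsHyperplane {n : ℕ} (H : AffineSubspace ℝ (E n)) : Prop :=
  (H : Set (E n)).Nonempty ∧ Module.finrank ℝ H.direction + 1 = n

open scoped Classical in
/-- The dimension of a convex set: the dimension of its affine hull, with `sdim ∅ = -1`. -/
def sdim {n : ℕ} (s : Set (E n)) : ℤ :=
  if s = ∅ then -1 else Module.finrank ℝ (affineSpan ℝ s).direction

theorem Convex.interior_diff_nonempty {V : Type*} [AddCommGroup V] [Module ℝ V]
    [TopologicalSpace V] [IsTopologicalAddGroup V] [ContinuousSMul ℝ V] {s K : Set V}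
    (hs : Convex ℝ s) (hs' : (interior s).Nonempty) (hK : IsClosed K)
    (hsK : (s \ K).Nonempty) : (interior (s \ K)).Nonempty := by
  rw [sdiff_eq, interior_inter, hK.isOpen_compl.interior_eq, ← sdiff_eq]
  by_contra h
  have hint : interior s ⊆ K := sdiff_eq_empty.1 (not_nonempty_iff_eq_empty.1 h)
  have hsub : s ⊆ K := calc
    s ⊆ closure s := subset_closure
    _ = closure (interior s) := (hs.closure_interior_eq_closure_of_nonempty_interior hs').symm
    _ ⊆ K := closure_minimal hint hK
  obtain ⟨x, hxs, hxK⟩ := hsK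
  exact hxK (hsub hxs)

theorem Convex.interior_coe_preimage_diff_nonempty {V : Type*} [NormedAddCommGroup V]
    [NormedSpace ℝ V] [FiniteDimensional ℝ V] {A : AffineSubspace ℝ V} {s K : Set V}
    (hs : Convex ℝ s) (hA : affineSpan ℝ s = A) (hK : IsClosed K) (hsK : (s \ K).Nonempty) :
    (interior (((↑) : A → V) ⁻¹' (s \ K))).Nonempty := by
  subst hA
  obtain ⟨p, hps, hpK⟩ := hsK
  have : Nonempty s := ⟨⟨p, hps⟩⟩
  -- Identify `aff(s)` with the vector space `direction (aff(s))`, the origin going to `p`.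
  let φ := (AffineIsometryEquiv.constVSub ℝ
    (⟨p, subset_affineSpan ℝ s hps⟩ : affineSpan ℝ s)).symm
  let f : (affineSpan ℝ s).direction →ᵃ[ℝ] V :=
    (affineSpan ℝ s).subtype.comp φ.toAffineEquiv.toAffineMap
  have hspan : affineSpan ℝ (f ⁻¹' s) = ⊤ := by
    change affineSpan ℝ (φ.toAffineEquiv ⁻¹' ((↑) ⁻¹' s)) = ⊤
    rw [← AffineSubspace.comap_span, affineSpan_coe_preimage_eq_top, AffineSubspace.comap_top]
  have hf : Continuous f := continuous_subtype_val.comp φ.continuous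
  have hfp : f 0 = p := by simp [f, φ]
  have hC := hs.affine_preimage f
  obtain ⟨v, hv⟩ := hC.interior_diff_nonempty
    (hC.interior_nonempty_iff_affineSpan_eq_top.2 hspan) (hK.preimage hf)
    ⟨0, by simpa [hfp] using hps, by simpa [hfp] using hpK⟩
  refine ⟨φ v, ?_⟩
  rw [← mem_preimage, ← φ.coe_toHomeomorph, Homeomorph.preimage_interior]
  exact hv

theorem stmt_11 (d : ℕ) (D : Set (E d)) (hD : IsCompact D)
    (𝒴 : Set (Set (E d)))
    (hsub : ∀ Y ∈ 𝒴, Y ⊆ (affineSpan ℝ D : Set (E d)))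
    (hne' : ∀ Y ∈ 𝒴, (convexHull ℝ (Y ∪ D) \ D).Nonempty)
    (hdisj : ∀ Y ∈ 𝒴, ∀ Y' ∈ 𝒴, Y ≠ Y' →
      Disjoint (convexHull ℝ (Y ∪ D) \ D) (convexHull ℝ (Y' ∪ D) \ D)) :
    𝒴.Countable := by
  let A := affineSpan ℝ D
  have hspan : ∀ Y ∈ 𝒴, affineSpan ℝ (convexHull ℝ (Y ∪ D)) = A := fun Y hY => by
    rw [affineSpan_convexHull, AffineSubspace.span_union,
      sup_eq_right.2 (affineSpan_le.2 (hsub Y hY))]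
  refine PairwiseDisjoint.countable_of_nonempty_interior
    (s := fun Y => ((↑) : A → E d) ⁻¹' (convexHull ℝ (Y ∪ D) \ D))
    (fun Y hY Y' hY' hYY' => (hdisj Y hY Y' hY' hYY').preimage _) fun Y hY => ?_
  exact (convex_convexHull ℝ _).interior_coe_preimage_diff_nonempty (hspan Y hY) hD.isClosed
    (hne' Y hY)
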